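/- For i = 1, ..., n let G_i be s-graphs with chosen edges e_i = v_iw_i ∈ E(G_i), and let G = ∑_{i=1}^n G_i be the graph obtained from the disjoint union of the graphs G_i − e_i by adding, for n = 2k, the edges v_{2j}v_{2j+1} and w_{2j+1}w_{2j+2} for 0 ≤ j ≤ k−1 with indices modulo 2k (and for an odd number of summands the analogous connecting edges together with the closing edge as in the cyclic construction). Then G is an s-graph. -/

import Mathlib

/-- A finite multigraph: finite vertex and edge types together with an incidence map
assigning to each edge an unordered pair of vertices. -/
structure Mgraph where
  V : Type
  E : Type
  [finV : Finite V]
  [finE : Finite E]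
  inc : E → Sym2 V

attribute [instance] Mgraph.finV Mgraph.finE

namespace Mgraph

/-- A multigraph is loopless if no edge joins a vertex to itself. -/
def Loopless (G : Mgraph) : Prop := ∀ e : G.E, ¬ (G.inc e).IsDiag

/-- The degree of a vertex: the number of edges incident with it. -/
noncomputable def degree (G : Mgraph) (v : G.V) : ℕ :=
  Nat.card {e : G.E // v ∈ G.inc e}

/-- The maximum degree Δ(G). -/
noncomputable def maxDegree (G : Mgraph) : ℕ :=
  sSup (Set.range G.degree)

/-- `G` is `s`-regular. -/
def Regular (G : Mgraph) (s : ℕ) : Prop := ∀ v : G.V, G.degree v = s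

/-- A proper edge coloring with `k` colors: adjacent (distinct, sharing an endpoint)
edges receive different colors. -/
def IsProperEdgeColoring (G : Mgraph) {k : ℕ} (c : G.E → Fin k) : Prop :=
  ∀ e f : G.E, e ≠ f → (∃ v : G.V, v ∈ G.inc e ∧ v ∈ G.inc f) → c e ≠ c f

/-- `G` admits a proper edge coloring with `k` colors. -/
def EdgeColorable (G : Mgraph) (k : ℕ) : Prop :=
  ∃ c : G.E → Fin k, G.IsProperEdgeColoring c

/-- The chromatic index χ'(G). -/
noncomputable def chromaticIndex (G : Mgraph) : ℕ :=
  sInf {k : ℕ | G.EdgeColorable k}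

/-- `G` is class 1, i.e. χ'(G) = Δ(G). -/
noncomputable def ClassOne (G : Mgraph) : Prop := G.chromaticIndex = G.maxDegree

/-- Delete a set of edges from `G`. -/
def deleteEdges (G : Mgraph) (S : Set G.E) : Mgraph where
  V := G.V
  E := {e : G.E // e ∉ S}
  inc e := G.inc e.1

/-- Delete a set of vertices from `G`, together with all incident edges. -/
def deleteVerts (G : Mgraph) (S : Set G.V) : Mgraph where
  V := {v : G.V // v ∉ S}
  E := {e : G.E // ∀ v : G.V, v ∈ G.inc e → v ∉ S}
  inc e := (G.inc e.1).pmap (fun v hv => ⟨v, hv⟩) e.2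

/-- The simple graph on `V(G)` whose adjacency is realized by the edges in `F`. -/
def factorGraph (G : Mgraph) (F : Set G.E) : SimpleGraph G.V where
  Adj u w := u ≠ w ∧ ∃ e ∈ F, G.inc e = s(u, w)
  symm := ⟨by
    rintro u w ⟨hne, e, heF, he⟩
    exact ⟨hne.symm, e, heF, by rw [he]; exact Sym2.eq_swap⟩⟩
  loopless := ⟨by rintro v ⟨hne, -⟩; exact hne rfl⟩

/-- `G` is connected (in particular nonempty). -/
def Connected (G : Mgraph) : Prop := (G.factorGraph Set.univ).Connected

/-- `G` is 2-connected: it has at least 3 vertices and deleting any single vertex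
leaves a connected graph. -/
def TwoConnected (G : Mgraph) : Prop :=
  3 ≤ Nat.card G.V ∧ ∀ v : G.V, (G.deleteVerts {v}).Connected

/-- The number of odd cycles in the spanning subgraph of `G` with edge set `F`:
the number of connected components of odd cardinality. -/
noncomputable def oddCycles (G : Mgraph) (F : Set G.E) : ℕ :=
  Nat.card {C : (G.factorGraph F).ConnectedComponent //
    Odd (Nat.card {v : G.V // (G.factorGraph F).connectedComponentMk v = C})}

/-- `F` is a 1-factor (perfect matching): every vertex meets exactly one edge of `F`. -/
def IsOneFactor (G : Mgraph) (F : Set G.E) : Prop :=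
  ∀ v : G.V, Nat.card {e : G.E // e ∈ F ∧ v ∈ G.inc e} = 1

/-- `F` is a 2-factor (spanning 2-regular subgraph): every vertex meets exactly two
edges of `F`. -/
def IsTwoFactor (G : Mgraph) (F : Set G.E) : Prop :=
  ∀ v : G.V, Nat.card {e : G.E // e ∈ F ∧ v ∈ G.inc e} = 2

/-- `f` encodes a decomposition of the edge set of `G` into `n` 2-factors
(the fibers of `some i`), together with, possibly, one 1-factor (the fiber of `none`,
which is required to be empty when no 1-factor is used). -/
def IsDecomp (G : Mgraph) {n : ℕ} (f : G.E → Option (Fin n)) : Prop :=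
  ((∀ e : G.E, f e ≠ none) ∨ G.IsOneFactor {e | f e = none}) ∧
    ∀ i : Fin n, G.IsTwoFactor {e | f e = some i}

/-- The total number of odd cycles of the 2-factors of a decomposition. -/
noncomputable def decompOdd (G : Mgraph) {n : ℕ} (f : G.E → Option (Fin n)) : ℕ :=
  ∑ i : Fin n, G.oddCycles {e | f e = some i}

/-- The oddness ξ(G): the minimum total number of odd cycles over all decompositions of
the edge set into 2-factors (together with one 1-factor when the degree is odd);
`⊤` if no such decomposition exists. -/
noncomputable def oddness (G : Mgraph) : ℕ∞ :=
  sInf {k : ℕ∞ | ∃ (n : ℕ) (f : G.E → Option (Fin n)),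
    G.IsDecomp f ∧ k = (G.decompOdd f : ℕ∞)}

/-- The minimum number of edges whose removal from `G` leaves a graph that is properly
edge colorable with `D` colors. -/
noncomputable def resistanceTo (G : Mgraph) (D : ℕ) : ℕ :=
  sInf {k : ℕ | ∃ S : Set G.E, Nat.card S = k ∧ (G.deleteEdges S).EdgeColorable D}

/-- The resistance r(G): the minimum number of edges whose removal from `G` leaves a
Δ(G)-edge-colorable graph. -/
noncomputable def resistance (G : Mgraph) : ℕ := G.resistanceTo G.maxDegree

/-- The vertex resistance r_v(G): the minimum number of vertices whose removal from `G`
leaves a class 1 graph. -/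
noncomputable def rv (G : Mgraph) : ℕ :=
  sInf {k : ℕ | ∃ S : Set G.V, Nat.card S = k ∧ (G.deleteVerts S).ClassOne}

/-- The vertex resistance r'_v(G): the minimum number of vertices whose removal from `G`
leaves a graph `H` with χ'(H) ≤ Δ(G). -/
noncomputable def rv' (G : Mgraph) : ℕ :=
  sInf {k : ℕ | ∃ S : Set G.V, Nat.card S = k ∧
    (G.deleteVerts S).chromaticIndex ≤ G.maxDegree}

/-- The edge boundary ∂_G(X): the set of edges with one endpoint in `X` and one
endpoint outside `X`. -/
def edgeBoundary (G : Mgraph) (X : Set G.V) : Set G.E :=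
  {e : G.E | ∃ u ∈ G.inc e, ∃ w ∈ G.inc e, u ∈ X ∧ w ∉ X}

/-- `G` is an `s`-graph: a loopless `s`-regular multigraph with `|∂_G(X)| ≥ s` for every
odd set `X` of vertices. -/
def IsSGraph (G : Mgraph) (s : ℕ) : Prop :=
  G.Loopless ∧ G.Regular s ∧
    ∀ X : Set G.V, Odd (Nat.card X) → s ≤ Nat.card (G.edgeBoundary X)

end Mgraph

/-- The connecting edges of the sum construction `∑ Gᵢ` on `m` summands (indexed by
`Fin m`): listing the distinguished endpoints as `v₀, w₀, …, v_{m-1}, w_{m-1}`, the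
`t`-th new edge is `v_t v_{t+1}` for even `t < m - 1`, `w_t w_{(t+1) mod m}` for odd
`t`, and (when `m` is odd, so that `t = m - 1` is even) the closing edge is
`v_{m-1} w₀`. This is exactly the cyclic pattern
`v₀v₁, w₁w₂, v₂v₃, w₃w₄, …` of the sum construction. -/
def sumConnector (m : ℕ) (hm : 0 < m) (Gs : Fin m → Mgraph)
    (vs ws : ∀ i : Fin m, (Gs i).V) (t : Fin m) : Sym2 (Σ i : Fin m, (Gs i).V) :=
  if h : t.val + 1 < m then
    if t.val % 2 = 0 then
      s(⟨t, vs t⟩, ⟨⟨t.val + 1, h⟩, vs ⟨t.val + 1, h⟩⟩)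
    else
      s(⟨t, ws t⟩, ⟨⟨t.val + 1, h⟩, ws ⟨t.val + 1, h⟩⟩)
  else
    if t.val % 2 = 0 then
      s(⟨t, vs t⟩, ⟨⟨0, hm⟩, ws ⟨0, hm⟩⟩)
    else
      s(⟨t, ws t⟩, ⟨⟨0, hm⟩, ws ⟨0, hm⟩⟩)

/-- The sum `∑ Gᵢ` of the multigraphs `Gᵢ` with distinguished edges `eᵢ = vᵢwᵢ`:
delete each `eᵢ` and connect the resulting deficient vertices cyclically by the
new edges `v₀v₁, w₁w₂, v₂v₃, w₃w₄, …` (with the closing edge `v_{m-1}w₀` when the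
number of summands is odd). -/
def sumGraph (m : ℕ) (hm : 0 < m) (Gs : Fin m → Mgraph) (es : ∀ i : Fin m, (Gs i).E)
    (vs ws : ∀ i : Fin m, (Gs i).V) : Mgraph where
  V := Σ i : Fin m, (Gs i).V
  E := (Σ i : Fin m, {e : (Gs i).E // e ≠ es i}) ⊕ Fin m
  inc := Sum.elim
    (fun p => ((Gs p.1).inc p.2.1).map (Sigma.mk p.1))
    (sumConnector m hm Gs vs ws)


/-!
Regularity and looplessness of `∑ Gᵢ` are local: the ends `vᵢ, wᵢ` of the deleted edge `eᵢ`
each lose `eᵢ` and gain exactly one connecting edge. For an odd set `X` of vertices of `∑ Gᵢ`,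
some trace `Xᵢ` on a summand is odd, and every edge of `∂_{Gᵢ}(Xᵢ)` other than `eᵢ` lies in
`∂(X)`, so `|∂(X)| ≥ s - 1`. Parity closes the gap: by the handshake lemma `s |X| + |∂(X)|` is
even, and `|X|` is odd, so `|∂(X)| ≡ s (mod 2)`.
-/

theorem Nat.card_subtype_mem_sym2_mk {T α : Type*} [Finite T] {f g : T → α}
    (hfg : ∀ t, f t ≠ g t) (a : α) :
    Nat.card {t // a ∈ s(f t, g t)} = Nat.card {t // f t = a} + Nat.card {t // g t = a} := by
  classical
  have hdisj : Disjoint (fun t ↦ f t = a) (fun t ↦ g t = a) :=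
    Pi.disjoint_iff.mpr fun t ↦ Prop.disjoint_iff.mpr fun ⟨hf, hg⟩ ↦ hfg t (hf.trans hg.symm)
  rw [← Nat.card_sum, ← Nat.card_congr (subtypeOrEquiv _ _ hdisj)]
  simp only [Sym2.mem_iff, eq_comm]

theorem Nat.card_subtype_sigma_mk_eq {ι : Type*} {β : ι → Type*} (f : ∀ i, β i) (i : ι)
    (x : β i) [Decidable (x = f i)] :
    Nat.card {j // (⟨j, f j⟩ : Sigma β) = ⟨i, x⟩} = if x = f i then 1 else 0 := by
  split_ifs with hx
  · subst hx
    rw [Nat.card_eq_one_iff_unique]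
    exact ⟨⟨fun a b ↦ Subtype.ext (congrArg Sigma.fst (a.2.trans b.2.symm))⟩, ⟨⟨i, rfl⟩⟩⟩
  · refine Nat.card_eq_zero.mpr (.inl ⟨fun ⟨j, hj⟩ ↦ hx ?_⟩)
    obtain ⟨rfl, h⟩ := Sigma.mk.inj_iff.mp hj
    exact (eq_of_heq h).symm

theorem Nat.card_subtype_mem_map_sigmaMk {ι : Type*} {β E : ι → Type*}
    (f : ∀ j, E j → Sym2 (β j)) (i : ι) (x : β i) :
    Nat.card {p : Σ j, E j // (⟨i, x⟩ : Sigma β) ∈ (f p.1 p.2).map (Sigma.mk p.1)} =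
      Nat.card {e : E i // x ∈ f i e} := by
  have hfst {p : Σ j, E j} (h : (⟨i, x⟩ : Sigma β) ∈ (f p.1 p.2).map (Sigma.mk p.1)) :
      p.1 = i := by
    obtain ⟨y, -, hy⟩ := Sym2.mem_map.mp h
    exact congrArg Sigma.fst hy
  refine Nat.card_congr ((Equiv.subtypeSubtypeEquivSubtype hfst).symm.trans
    (Equiv.subtypeEquiv (Equiv.sigmaSubtype i) ?_))
  rintro ⟨⟨j, e⟩, rfl⟩
  simp [Sym2.mem_map]

theorem Nat.exists_odd_card_sigma_fiber {ι : Type*} [Fintype ι] {β : ι → Type*}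
    [∀ i, Finite (β i)] {X : Set (Sigma β)} (hX : Odd (Nat.card X)) :
    ∃ i, Odd (Nat.card {x | (⟨i, x⟩ : Sigma β) ∈ X}) := by
  classical
  have hsplit : X ≃ Σ i, {x | (⟨i, x⟩ : Sigma β) ∈ X} :=
    { toFun p := ⟨p.1.1, p.1.2, p.2⟩
      invFun q := ⟨⟨q.1, q.2.1⟩, q.2.2⟩
      left_inv _ := rfl
      right_inv _ := rfl }
  rw [Nat.card_congr hsplit, Nat.card_sigma, Finset.odd_sum_iff_odd_card_odd] at hX
  obtain ⟨i, hi⟩ := Finset.card_pos.mp hX.pos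
  exact ⟨i, (Finset.mem_filter.mp hi).2⟩

namespace Mgraph

variable {G : Mgraph}

theorem Loopless.ne_of_inc_eq (hG : G.Loopless) {e : G.E} {v w : G.V}
    (h : G.inc e = s(v, w)) : v ≠ w := by
  rintro rfl
  exact hG e (h ▸ Sym2.mk_isDiag_iff.mpr rfl)

theorem mem_edgeBoundary_iff_of_inc_eq {e : G.E} {a b : G.V} (h : G.inc e = s(a, b))
    (X : Set G.V) : e ∈ G.edgeBoundary X ↔ ¬(a ∈ X ↔ b ∈ X) := by
  simp only [edgeBoundary, Set.mem_ofPred_eq, h, Sym2.mem_iff]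
  constructor
  · rintro ⟨u, rfl | rfl, w, rfl | rfl, hu, hw⟩ <;> tauto
  · intro hab
    by_cases ha : a ∈ X
    · exact ⟨a, .inl rfl, b, .inr rfl, ha, by tauto⟩
    · exact ⟨b, .inr rfl, a, .inl rfl, by tauto, ha⟩

open Finset

theorem Loopless.odd_card_filter_mem_inc_iff (hG : G.Loopless) [DecidableEq G.V]
    (X : Finset G.V) (e : G.E) : Odd #{v ∈ X | v ∈ G.inc e} ↔ e ∈ G.edgeBoundary X := by
  obtain ⟨⟨a, b⟩, hab⟩ := (G.inc e).exists_rep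
  have hne := hG.ne_of_inc_eq hab.symm
  rw [mem_edgeBoundary_iff_of_inc_eq hab.symm, ← hab]
  simp only [Sym2.mem_iff, filter_or, filter_eq']
  rw [card_union_of_disjoint (by split_ifs <;> simp [hne])]
  by_cases ha : a ∈ X <;> by_cases hb : b ∈ X <;> simp [ha, hb]

open scoped Classical in
theorem degree_eq_card_filter [Fintype G.E] (v : G.V) : G.degree v = #{e | v ∈ G.inc e} := by
  rw [degree, Nat.card_eq_fintype_card, Fintype.card_subtype]

/-- Handshake lemma modulo 2: the degrees in `X` add up to `|∂(X)|` plus twice the number of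
edges inside `X`. -/
theorem Loopless.even_sum_degree_iff (hG : G.Loopless) (X : Finset G.V) :
    Even (∑ v ∈ X, G.degree v) ↔ Even (Nat.card (G.edgeBoundary X)) := by
  classical
  have := Fintype.ofFinite G.E
  simp only [degree_eq_card_filter]
  rw [show ∑ v ∈ X, #{e | v ∈ G.inc e} = ∑ e, #{v ∈ X | v ∈ G.inc e} from
    sum_card_bipartiteAbove_eq_sum_card_bipartiteBelow _, even_sum_iff_even_card_odd]
  simp only [hG.odd_card_filter_mem_inc_iff, Nat.card_eq_fintype_card, Fintype.card_subtype]

theorem Regular.even_mul_card_add_card_edgeBoundary {s : ℕ} (hG : G.Loopless)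
    (hs : G.Regular s) (X : Set G.V) : Even (s * Nat.card X + Nat.card (G.edgeBoundary X)) := by
  classical
  have := Fintype.ofFinite G.V
  have h := hG.even_sum_degree_iff X.toFinset
  simp only [hs _, sum_const, smul_eq_mul, Set.coe_toFinset] at h
  rw [Nat.even_add, Nat.card_eq_card_toFinset, mul_comm, h]

theorem degree_deleteEdges_eq_ncard (S : Set G.E) (v : G.V) :
    (G.deleteEdges S).degree v = ({e | v ∈ G.inc e} \ S).ncard := by
  rw [← Nat.card_coe_set_eq]
  show Nat.card {e : {e // e ∉ S} // v ∈ G.inc e.1} = _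
  exact Nat.card_congr ((Equiv.subtypeSubtypeEquivSubtypeInter (· ∉ S) (v ∈ G.inc ·)).trans
    (Equiv.subtypeEquivRight fun _ ↦ and_comm))

theorem degree_deleteEdges_singleton_add_one {e₀ : G.E} {v : G.V} (h : v ∈ G.inc e₀) :
    (G.deleteEdges {e₀}).degree v + 1 = G.degree v := by
  rw [degree_deleteEdges_eq_ncard,
    Set.ncard_sdiff_singleton_add_one (s := {e | v ∈ G.inc e}) h]
  exact (Nat.card_coe_set_eq _).symm

theorem degree_deleteEdges_singleton_of_notMem {e₀ : G.E} {v : G.V} (h : v ∉ G.inc e₀) :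
    (G.deleteEdges {e₀}).degree v = G.degree v := by
  rw [degree_deleteEdges_eq_ncard, Set.sdiff_singleton_eq_self (s := {e | v ∈ G.inc e}) h]
  exact (Nat.card_coe_set_eq _).symm

end Mgraph

section SumGraph

open Mgraph

def sumPort {m : ℕ} {Gs : Fin m → Mgraph} (vs ws : ∀ i, (Gs i).V) (i : Fin m) (b : Bool) :
    (Gs i).V :=
  bif b then ws i else vs i

variable {m : ℕ} (hm : 0 < m) {Gs : Fin m → Mgraph} (es : ∀ i, (Gs i).E)
  {vs ws : ∀ i, (Gs i).V}

theorem sumPort_injective {i : Fin m} (h : vs i ≠ ws i) : Function.Injective (sumPort vs ws i) := by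
  rintro (_ | _) (_ | _) hb <;> simp_all [sumPort, eq_comm]

/-- Summand `t` is left at port `Odd t` and entered at port `Even t`, so every port is an end
of exactly one connecting edge. -/
theorem sumConnector_eq (t : Fin m) :
    sumConnector m hm Gs vs ws t =
      s(⟨t, sumPort vs ws t (decide (Odd t.val))⟩,
        ⟨finRotate m t, sumPort vs ws (finRotate m t) (decide (Even (finRotate m t).val))⟩) := by
  obtain ⟨n, rfl⟩ : ∃ n, m = n + 1 := Nat.exists_eq_add_one.mpr hm
  obtain ⟨t, ht⟩ := t
  unfold sumConnector
  dsimp only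
  split_ifs with hlt hpar hpar
  · rw [finRotate_of_lt (by omega)]
    simp [sumPort, Nat.odd_iff, Nat.even_iff, Nat.add_mod, hpar]
  · rw [finRotate_of_lt (by omega)]
    simp [sumPort, Nat.odd_iff, Nat.mod_two_ne_zero.mp hpar]
  · obtain rfl : t = n := by omega
    rw [finRotate_last']
    simp [sumPort, Nat.odd_iff, hpar]
  · obtain rfl : t = n := by omega
    rw [finRotate_last']
    simp [sumPort, Nat.odd_iff, Nat.mod_two_ne_zero.mp hpar]

theorem sumConnector_not_isDiag {t : Fin m} (h : vs t ≠ ws t) :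
    ¬(sumConnector m hm Gs vs ws t).IsDiag := by
  rw [sumConnector_eq, Sym2.mk_isDiag_iff]
  intro hdiag
  generalize finRotate m t = u at hdiag
  obtain ⟨rfl, hdiag⟩ := Sigma.mk.inj_iff.mp hdiag
  simpa [← Nat.not_even_iff_odd] using sumPort_injective h (eq_of_heq hdiag)

theorem card_mem_sumConnector (hvw : ∀ i, vs i ≠ ws i) (i : Fin m) [DecidableEq (Gs i).V]
    (x : (Gs i).V) :
    Nat.card {t // ⟨i, x⟩ ∈ sumConnector m hm Gs vs ws t} =
      (if x = vs i then 1 else 0) + if x = ws i then 1 else 0 := by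
  have hne (t : Fin m) := sumConnector_not_isDiag hm (hvw t)
  simp_rw [sumConnector_eq, Sym2.mk_isDiag_iff] at hne ⊢
  rw [Nat.card_subtype_mem_sym2_mk hne, Nat.card_congr (Equiv.subtypeEquivOfSubtype (finRotate m)
      (p := fun j ↦ (⟨j, sumPort vs ws j (decide (Even j.val))⟩ : Σ j, (Gs j).V) = ⟨i, x⟩)),
    Nat.card_subtype_sigma_mk_eq (fun j ↦ sumPort vs ws j (decide (Odd j.val))),
    Nat.card_subtype_sigma_mk_eq (fun j ↦ sumPort vs ws j (decide (Even j.val)))]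
  rcases Nat.even_or_odd i.val with h | h <;>
    simp [sumPort, h, Nat.not_odd_iff_even.mpr, Nat.not_even_iff_odd.mpr, add_comm]

theorem sumGraph_loopless (hGs : ∀ i, (Gs i).Loopless) (hvw : ∀ i, vs i ≠ ws i) :
    (sumGraph m hm Gs es vs ws).Loopless := by
  rintro (⟨j, e, -⟩ | t)
  · exact (Sym2.isDiag_map sigma_mk_injective).not.mpr (hGs j e)
  · exact sumConnector_not_isDiag hm (hvw t)

theorem sumGraph_degree (hvw : ∀ i, vs i ≠ ws i) (i : Fin m) [DecidableEq (Gs i).V]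
    (x : (Gs i).V) :
    (sumGraph m hm Gs es vs ws).degree ⟨i, x⟩ = ((Gs i).deleteEdges {es i}).degree x +
      ((if x = vs i then 1 else 0) + if x = ws i then 1 else 0) := by
  set G := sumGraph m hm Gs es vs ws
  refine (Nat.card_congr (Equiv.subtypeSum (p := fun e ↦ (⟨i, x⟩ : G.V) ∈ G.inc e))).trans ?_
  rw [Nat.card_sum, ← card_mem_sumConnector hm hvw i x]
  congr 1
  exact Nat.card_subtype_mem_map_sigmaMk (fun j (e : {e // e ≠ es j}) ↦ (Gs j).inc e) i x

theorem sumGraph_regular {s : ℕ} (hinc : ∀ i, (Gs i).inc (es i) = s(vs i, ws i))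
    (hvw : ∀ i, vs i ≠ ws i) (hGs : ∀ i, (Gs i).Regular s) :
    (sumGraph m hm Gs es vs ws).Regular s := by
  classical
  rintro ⟨i, x⟩
  rw [sumGraph_degree hm es hvw, ← hGs i x]
  by_cases hx : x ∈ (Gs i).inc (es i)
  · rw [← degree_deleteEdges_singleton_add_one hx]
    rw [hinc, Sym2.mem_iff] at hx
    rcases hx with rfl | rfl <;> simp [hvw i, (hvw i).symm]
  · rw [degree_deleteEdges_singleton_of_notMem hx]
    rw [hinc, Sym2.mem_iff, not_or] at hx
    simp [hx.1, hx.2]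

theorem card_edgeBoundary_le_card_edgeBoundary_sumGraph_add_one
    (X : Set (sumGraph m hm Gs es vs ws).V) (i : Fin m) :
    Nat.card ((Gs i).edgeBoundary {x | ⟨i, x⟩ ∈ X}) ≤
      Nat.card ((sumGraph m hm Gs es vs ws).edgeBoundary X) + 1 := by
  set B := (Gs i).edgeBoundary {x | ⟨i, x⟩ ∈ X}
  have hmem (e : ↥(B \ {es i})) : (Sum.inl ⟨i, e.1, e.2.2⟩ : (sumGraph m hm Gs es vs ws).E) ∈
      (sumGraph m hm Gs es vs ws).edgeBoundary X := by
    obtain ⟨u, hu, w, hw, huX, hwX⟩ := e.2.1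
    exact ⟨⟨i, u⟩, Sym2.mem_map.mpr ⟨u, hu, rfl⟩, ⟨i, w⟩, Sym2.mem_map.mpr ⟨w, hw, rfl⟩, huX, hwX⟩
  calc Nat.card B ≤ Nat.card ↥(B \ {es i}) + 1 := by
        rw [Nat.card_coe_set_eq, Nat.card_coe_set_eq]
        have := Set.pred_ncard_le_ncard_sdiff_singleton B (es i)
        omega
    _ ≤ _ := by
      gcongr
      refine Nat.card_le_card_of_injective (fun e ↦ ⟨_, hmem e⟩) fun a b h ↦ Subtype.ext ?_
      simpa [Subtype.ext_iff] using Sum.inl_injective (Subtype.ext_iff.mp h)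

end SumGraph

open Mgraph in
/-- If the `Gᵢ` are `s`-graphs with distinguished edges `eᵢ = vᵢwᵢ`, then the sum
`G = ∑ Gᵢ` is an `s`-graph. -/
theorem sumGraph_isSGraph (s : ℕ) (m : ℕ) (hm : 0 < m) (Gs : Fin m → Mgraph)
    (es : ∀ i : Fin m, (Gs i).E) (vs ws : ∀ i : Fin m, (Gs i).V)
    (hinc : ∀ i : Fin m, (Gs i).inc (es i) = s(vs i, ws i))
    (hS : ∀ i : Fin m, (Gs i).IsSGraph s) :
    (sumGraph m hm Gs es vs ws).IsSGraph s := by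
  have hvw (i : Fin m) : vs i ≠ ws i := (hS i).1.ne_of_inc_eq (hinc i)
  have hloop := sumGraph_loopless hm es (fun i ↦ (hS i).1) hvw
  have hreg := sumGraph_regular hm es hinc hvw (fun i ↦ (hS i).2.1)
  refine ⟨hloop, hreg, fun X hX ↦ ?_⟩
  obtain ⟨i, hi⟩ := Nat.exists_odd_card_sigma_fiber hX
  have hlower := ((hS i).2.2 _ hi).trans
    (card_edgeBoundary_le_card_edgeBoundary_sumGraph_add_one hm es X i)
  have hpar := hreg.even_mul_card_add_card_edgeBoundary hloop X
  by_contra hlt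
  obtain rfl : s = Nat.card ((sumGraph m hm Gs es vs ws).edgeBoundary X) + 1 := by omega
  rw [Nat.even_add, Nat.even_mul, Nat.even_add_one] at hpar
  have := Nat.not_even_iff_odd.mpr hX
  tauto
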